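/- arXiv:2207.06845 — 3 statements merged into one kernel-verified Lean document; each statement's English description precedes it below -/
import Mathlib

section
/- For every integer k ≥ 1, consider the polynomial f = z² + y⁵ + x₀⁹x₁ + (t₀^{90k} + t₁^{90k})·x₁¹⁰ in ℂ[t₀,t₁,x₀,x₁,y,z]. Then every point p ∈ ℂ⁶ at which all six partial derivatives ∂f/∂t₀, ∂f/∂t₁, ∂f/∂x₀, ∂f/∂x₁, ∂f/∂y, ∂f/∂z vanish satisfies either t₀(p) = t₁(p) = 0 or x₀(p) = x₁(p) = y(p) = z(p) = 0. -/
open MvPolynomial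

/-- Coordinates on `ℂ⁶`: `0 ↦ t₀`, `1 ↦ t₁`, `2 ↦ x₀`, `3 ↦ x₁`, `4 ↦ y`, `5 ↦ z`.
The polynomial `z² + y⁵ + x₀⁹x₁ + (t₀^(90k) + t₁^(90k))·x₁¹⁰`. -/
noncomputable def quasismoothPoly (k : ℕ) : MvPolynomial (Fin 6) ℂ :=
  X 5 ^ 2 + X 4 ^ 5 + X 2 ^ 9 * X 3 + (X 0 ^ (90 * k) + X 1 ^ (90 * k)) * X 3 ^ 10

/-- Every point of `ℂ⁶` where all six partial derivatives of
`z² + y⁵ + x₀⁹x₁ + (t₀^(90k) + t₁^(90k))·x₁¹⁰` vanish satisfies either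
`t₀ = t₁ = 0` or `x₀ = x₁ = y = z = 0`. -/
theorem quasismooth_X8k7k (k : ℕ) (hk : 1 ≤ k) (p : Fin 6 → ℂ)
    (h : ∀ i : Fin 6, MvPolynomial.eval p (MvPolynomial.pderiv i (quasismoothPoly k)) = 0) :
    (p 0 = 0 ∧ p 1 = 0) ∨ (p 2 = 0 ∧ p 3 = 0 ∧ p 4 = 0 ∧ p 5 = 0) := by
  have h0 := h 0
  have h1 := h 1
  have h3 := h 3
  have h4 := h 4
  have h5 := h 5
  simp only [quasismoothPoly, map_add, map_mul, pderiv_X, pderiv_pow, pderiv_mul, map_pow,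
    eval_X, eval_mul, eval_add, eval_pow, Pi.single_apply, map_natCast, map_one] at h0 h1 h3 h4 h5
  norm_num at h0 h1 h3 h4 h5
  simp (config := { decide := true }) only [ite_true, ite_false, zero_add, add_zero,
    zero_mul, mul_zero] at h0 h1 h3 h4 h5
  have hy4 : p 4 ^ 4 = 0 := by linear_combination h4 / 5
  have hy : p 4 = 0 := pow_eq_zero_iff (by norm_num : (4:ℕ) ≠ 0) |>.mp hy4
  have hz : p 5 = 0 := by linear_combination h5 / 2
  have hkC : (k : ℂ) ≠ 0 := Nat.cast_ne_zero.mpr (by omega)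
  have hk' : 90 * k - 1 ≠ 0 := by omega
  by_cases hx1 : p 3 = 0
  · right
    refine ⟨?_, hx1, hy, hz⟩
    have h9 : p 2 ^ 9 = 0 := by rw [hx1] at h3; simpa using h3
    exact pow_eq_zero_iff (by norm_num : (9:ℕ) ≠ 0) |>.mp h9
  · left
    have h10 : p 3 ^ 10 ≠ 0 := pow_ne_zero _ hx1
    constructor
    · have hp0 : p 0 ^ (90 * k - 1) = 0 := by
        rcases mul_eq_zero.mp h0 with h | h
        · rcases mul_eq_zero.mp h with h' | h'
          · rcases mul_eq_zero.mp h' with h'' | h''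
            · exact absurd h'' (by norm_num)
            · exact absurd h'' hkC
          · exact h'
        · exact absurd h h10
      exact pow_eq_zero_iff hk' |>.mp hp0
    · have hp1 : p 1 ^ (90 * k - 1) = 0 := by
        rcases mul_eq_zero.mp h1 with h | h
        · rcases mul_eq_zero.mp h with h' | h'
          · rcases mul_eq_zero.mp h' with h'' | h''
            · exact absurd h'' (by norm_num)
            · exact absurd h'' hkC
          · exact h'
        · exact absurd h h10
      exact pow_eq_zero_iff hk' |>.mp hp1
end

section
/- Let d and d₀ be integers with d₀ < d. Let f = z² + y⁵ + Σ c_{a₀,a₁,a₂}(t₀,t₁)·x₀^{a₀} x₁^{a₁} y^{a₂} in ℂ[t₀,t₁,x₀,x₁,y,z], where the sum runs over all (a₀,a₁,a₂) ∈ ℕ³ with a₀ + a₁ + 2a₂ = 10 and a₂ ≠ 5, and where each c_{a₀,a₁,a₂} ∈ ℂ[t₀,t₁] is homogeneous of degree −a₀(d−d₀) − a₁(d₀−2d) if this integer is nonnegative, and is the zero polynomial otherwise. Then f vanishes identically on the locus {x₁ = y = z = 0} ⊂ ℂ⁶. If moreover 8d₀ < 7d, then all six partial derivatives of f also vanish identically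 on {x₁ = y = z = 0}. -/
open MvPolynomial Finset

lemma aux_pderiv_eval (p : Fin 6 → ℂ) (i j k : Fin 6) (g : MvPolynomial (Fin 6) ℂ)
    {m n : ℕ} (hj : p j = 0) (hk : p k = 0) (h2 : 2 ≤ m + n) :
    MvPolynomial.eval p (MvPolynomial.pderiv i (g * X j ^ m * X k ^ n)) = 0 := by
  rw [pderiv_mul, pderiv_mul, pderiv_pow, pderiv_pow]
  by_cases hn : n = 0
  · subst hn
    simp [hj, zero_pow (show m ≠ 0 by omega), zero_pow (show m - 1 ≠ 0 by omega)]
  · by_cases hm : m = 0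
    · simp [hj, hk, hm, zero_pow hn, zero_pow (show n - 1 ≠ 0 by omega)]
    · simp [hj, hk, zero_pow hn, zero_pow hm]

/-- Let `d₀ < d` be integers. Let
`f = z² + y⁵ + Σ c_{a₀,a₁,a₂}(t₀,t₁)·x₀^{a₀} x₁^{a₁} y^{a₂}`, the sum over all
`(a₀,a₁,a₂) ∈ ℕ³` with `a₀ + a₁ + 2a₂ = 10` and `a₂ ≠ 5`, where each `c_{a₀,a₁,a₂}`
is homogeneous of degree `−a₀(d−d₀) − a₁(d₀−2d)` if this is nonnegative and zero
otherwise. Then `f` vanishes identically on `{x₁ = y = z = 0} ⊂ ℂ⁶`, and if moreover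
`8d₀ < 7d` then all six partial derivatives of `f` vanish identically there.
Coordinates on `ℂ⁶`: `0 ↦ t₀`, `1 ↦ t₁`, `2 ↦ x₀`, `3 ↦ x₁`, `4 ↦ y`, `5 ↦ z`. -/
theorem singular_along_section (d d₀ : ℤ) (hdd : d₀ < d)
    (c : ℕ → ℕ → ℕ → MvPolynomial (Fin 2) ℂ)
    (hc : ∀ a₀ a₁ a₂ : ℕ,
      (0 ≤ -(a₀ : ℤ) * (d - d₀) - (a₁ : ℤ) * (d₀ - 2 * d) →
        (c a₀ a₁ a₂).IsHomogeneous (-(a₀ : ℤ) * (d - d₀) - (a₁ : ℤ) * (d₀ - 2 * d)).toNat) ∧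
      (-(a₀ : ℤ) * (d - d₀) - (a₁ : ℤ) * (d₀ - 2 * d) < 0 → c a₀ a₁ a₂ = 0))
    (f : MvPolynomial (Fin 6) ℂ)
    (hf : f = X 5 ^ 2 + X 4 ^ 5 +
      ∑ t ∈ (Finset.range 11 ×ˢ Finset.range 11 ×ˢ Finset.range 6).filter
          (fun t => t.1 + t.2.1 + 2 * t.2.2 = 10 ∧ t.2.2 ≠ 5),
        (MvPolynomial.rename (Fin.castLE (by norm_num : 2 ≤ 6)) (c t.1 t.2.1 t.2.2)) *
          X 2 ^ t.1 * X 3 ^ t.2.1 * X 4 ^ t.2.2) :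
    ∀ p : Fin 6 → ℂ, p 3 = 0 → p 4 = 0 → p 5 = 0 →
      MvPolynomial.eval p f = 0 ∧
      (8 * d₀ < 7 * d → ∀ i : Fin 6, MvPolynomial.eval p (MvPolynomial.pderiv i f) = 0) := by
  intro p h3 h4 h5
  constructor
  · rw [hf]
    simp only [map_add, map_sum, map_mul, map_pow, eval_X, h3, h4, h5]
    rw [show (0:ℂ)^2 + 0^5 = 0 by norm_num, zero_add]
    refine Finset.sum_eq_zero fun t ht => ?_
    simp only [Finset.mem_filter, Finset.mem_product, Finset.mem_range] at ht
    obtain ⟨-, h10, -⟩ := ht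
    by_cases h1 : t.2.1 = 0
    · by_cases h2 : t.2.2 = 0
      · have ha : t.1 = 10 := by omega
        have hz : c t.1 t.2.1 t.2.2 = 0 := by
          apply (hc _ _ _).2
          rw [ha, h1]
          push_cast
          linarith
        simp [hz]
      · simp [zero_pow h2]
    · simp [zero_pow h1]
  · intro h87 i
    rw [hf]
    simp only [map_add, map_sum]
    rw [show MvPolynomial.eval p (MvPolynomial.pderiv i ((X 5 : MvPolynomial (Fin 6) ℂ) ^ 2)) = 0 by
          rw [pderiv_pow]; simp [h5],
        show MvPolynomial.eval p (MvPolynomial.pderiv i ((X 4 : MvPolynomial (Fin 6) ℂ) ^ 5)) = 0 by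
          rw [pderiv_pow]; simp [h4, zero_pow (show 5 - 1 ≠ 0 by norm_num)]]
    rw [zero_add, zero_add]
    refine Finset.sum_eq_zero fun t ht => ?_
    simp only [Finset.mem_filter, Finset.mem_product, Finset.mem_range] at ht
    obtain ⟨-, h10, -⟩ := ht
    by_cases hle : t.2.1 + t.2.2 ≤ 1
    · have hz : c t.1 t.2.1 t.2.2 = 0 := by
        apply (hc _ _ _).2
        have hcase : (t.2.1 = 0 ∧ t.2.2 = 0 ∧ t.1 = 10) ∨ (t.2.1 = 1 ∧ t.2.2 = 0 ∧ t.1 = 9)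
            ∨ (t.2.1 = 0 ∧ t.2.2 = 1 ∧ t.1 = 8) := by omega
        rcases hcase with ⟨e1, e2, e0⟩ | ⟨e1, e2, e0⟩ | ⟨e1, e2, e0⟩ <;>
          rw [e1, e0] <;> push_cast <;> linarith
      simp [hz]
    · exact aux_pderiv_eval p i 3 4 _ h3 h4 (by omega)
end

section
/- Let d and d₀ be integers with d ≤ d₀ and 2d₀ ≤ 3d. Then for every point p ∈ ℂ⁶ (with coordinates t₀,t₁,x₀,x₁,y,z) such that (t₀(p),t₁(p)) ≠ (0,0) and (x₀(p),x₁(p),y(p),z(p)) ≠ (0,0,0,0), there exist natural numbers i,j,a₀,a₁,a₂,a₅ with a₀ + a₁ + 2a₂ + 5a₅ = 10 and i + j = a₀(d₀−d) + a₁(2d−d₀) such that the monomial t₀^i t₁^j x₀^{a₀} x₁^{a₁} y^{a₂} z^{a₅} does not vanish at p. -/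
/-- If `0 ≤ n` and not both `p 0, p 1` vanish, we can find `i j` with `i + j = n`
and `p 0 ^ i * p 1 ^ j ≠ 0`. -/
lemma aux_tpow (p : Fin 6 → ℂ) (ht : ¬(p 0 = 0 ∧ p 1 = 0)) (n : ℤ) (hn : 0 ≤ n) :
    ∃ i j : ℕ, (i : ℤ) + (j : ℤ) = n ∧ p 0 ^ i * p 1 ^ j ≠ 0 := by
  push_neg at ht
  by_cases h0 : p 0 = 0
  · refine ⟨0, n.toNat, by simp [Int.toNat_of_nonneg hn], ?_⟩
    simp [pow_ne_zero, ht h0]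
  · refine ⟨n.toNat, 0, by simp [Int.toNat_of_nonneg hn], ?_⟩
    simp [pow_ne_zero, h0]

/-- Let `d ≤ d₀` and `2d₀ ≤ 3d` be integers. For every point `p ∈ ℂ⁶` (with coordinates
`t₀,t₁,x₀,x₁,y,z` indexed by `0,…,5`) with `(t₀,t₁) ≠ (0,0)` and `(x₀,x₁,y,z) ≠ (0,0,0,0)`,
there are naturals `i,j,a₀,a₁,a₂,a₅` with `a₀ + a₁ + 2a₂ + 5a₅ = 10` and
`i + j = a₀(d₀−d) + a₁(2d−d₀)` such that `t₀^i t₁^j x₀^{a₀} x₁^{a₁} y^{a₂} z^{a₅}`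
does not vanish at `p`. -/
theorem base_point_free (d d₀ : ℤ) (h1 : d ≤ d₀) (h2 : 2 * d₀ ≤ 3 * d) (p : Fin 6 → ℂ)
    (ht : ¬(p 0 = 0 ∧ p 1 = 0)) (hx : ¬(p 2 = 0 ∧ p 3 = 0 ∧ p 4 = 0 ∧ p 5 = 0)) :
    ∃ i j a₀ a₁ a₂ a₅ : ℕ, a₀ + a₁ + 2 * a₂ + 5 * a₅ = 10 ∧
      (i : ℤ) + (j : ℤ) = (a₀ : ℤ) * (d₀ - d) + (a₁ : ℤ) * (2 * d - d₀) ∧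
      p 0 ^ i * p 1 ^ j * p 2 ^ a₀ * p 3 ^ a₁ * p 4 ^ a₂ * p 5 ^ a₅ ≠ 0 := by
  have hd : 0 ≤ d := by linarith
  by_cases h4 : p 4 ≠ 0
  · exact ⟨0, 0, 0, 0, 5, 0, by norm_num, by norm_num, by simpa using pow_ne_zero 5 h4⟩
  by_cases h5 : p 5 ≠ 0
  · exact ⟨0, 0, 0, 0, 0, 2, by norm_num, by norm_num, by simpa using pow_ne_zero 2 h5⟩
  by_cases h2' : p 2 ≠ 0
  · obtain ⟨i, j, hij, hpt⟩ := aux_tpow p ht (10 * (d₀ - d)) (by linarith)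
    refine ⟨i, j, 10, 0, 0, 0, by norm_num, by push_cast; linarith, ?_⟩
    simpa using mul_ne_zero hpt (pow_ne_zero 10 h2')
  · push_neg at h4 h5
    have h3 : p 3 ≠ 0 := by
      intro h3; push_neg at h2'; exact hx ⟨h2', h3, h4, h5⟩
    obtain ⟨i, j, hij, hpt⟩ := aux_tpow p ht (10 * (2 * d - d₀)) (by linarith)
    refine ⟨i, j, 0, 10, 0, 0, by norm_num, by push_cast; linarith, ?_⟩
    simp only [pow_zero, mul_one, one_mul]
    exact mul_ne_zero hpt (pow_ne_zero 10 h3)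
end
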